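/- arXiv:2512.18376 — 2 statements merged into one kernel-verified Lean document; each statement's English description precedes it below -/
import Mathlib

section
/- Let c > 1, θ ∈ ℝ, a, b ∈ ℝ with b² ≠ a², ω = (a²+b²)/((b²−a²)·√(c²−1)), t(x,y) = ay−bx, and Ω = {(x,y) : cosh²θ·sin²(ω·t) < 1}. With R(x,y) = arccos(coshθ·sin(ω·t)) and S(x,y) = ax + by + (2ab/(b²−a²))·t + arctanh(sinhθ·tan(ω·t)), define U : Ω → ℝ³ by U = (c·cos R, sin R·cosh S, sin R·sinh S), so that U takes values in the hyperboloid F_c = {(x,y,z) : x²/c² + y² − z² = 1}. Then at every point of Ω the vector □U = U_xx − U_yy is parallel to (U₁/c², U₂, U₃); i.e., there exists a function μ : Ω → ℝ such that U_xx − U_yy = μ·(U₁/c², U₂, U₃) on Ω. -/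
open Real

/-- First partial derivative in the `x` direction. -/
noncomputable def px (f : ℝ × ℝ → ℝ) (p : ℝ × ℝ) : ℝ := fderiv ℝ f p (1, 0)

/-- First partial derivative in the `y` direction. -/
noncomputable def py (f : ℝ × ℝ → ℝ) (p : ℝ × ℝ) : ℝ := fderiv ℝ f p (0, 1)

/-- The inverse hyperbolic tangent, `arctanh x = (1/2) log ((1+x)/(1-x))`. -/
noncomputable def arctanh (x : ℝ) : ℝ := Real.log ((1 + x) / (1 - x)) / 2

noncomputable def E (q1 q2 m n c1 c2 c3 c4 : ℝ) : ℝ × ℝ → ℝ := fun p =>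
  c1 * (Real.cos (q1 * p.1 + q2 * p.2) * Real.cosh (m * p.1 + n * p.2)) +
  c2 * (Real.cos (q1 * p.1 + q2 * p.2) * Real.sinh (m * p.1 + n * p.2)) +
  c3 * (Real.sin (q1 * p.1 + q2 * p.2) * Real.cosh (m * p.1 + n * p.2)) +
  c4 * (Real.sin (q1 * p.1 + q2 * p.2) * Real.sinh (m * p.1 + n * p.2))

lemma E_diff (q1 q2 m n c1 c2 c3 c4 : ℝ) : Differentiable ℝ (E q1 q2 m n c1 c2 c3 c4) := by
  unfold E; fun_prop

lemma E_slice_x (q1 q2 m n c1 c2 c3 c4 : ℝ) (p : ℝ × ℝ) :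
    HasDerivAt (fun s => E q1 q2 m n c1 c2 c3 c4 (s, p.2))
      (E q1 q2 m n (m*c2+q1*c3) (m*c1+q1*c4) (m*c4-q1*c1) (m*c3-q1*c2) p) p.1 := by
  have hq : HasDerivAt (fun s : ℝ => q1 * s + q2 * p.2) q1 p.1 := by
    simpa using ((hasDerivAt_id p.1).const_mul q1).add_const (q2 * p.2)
  have hL : HasDerivAt (fun s : ℝ => m * s + n * p.2) m p.1 := by
    simpa using ((hasDerivAt_id p.1).const_mul m).add_const (n * p.2)
  have h := ((((hq.cos.mul hL.cosh).const_mul c1).add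
      ((hq.cos.mul hL.sinh).const_mul c2)).add
      ((hq.sin.mul hL.cosh).const_mul c3)).add
      ((hq.sin.mul hL.sinh).const_mul c4)
  refine h.congr_deriv ?_
  unfold E; ring

lemma E_slice_y (q1 q2 m n c1 c2 c3 c4 : ℝ) (p : ℝ × ℝ) :
    HasDerivAt (fun s => E q1 q2 m n c1 c2 c3 c4 (p.1, s))
      (E q1 q2 m n (n*c2+q2*c3) (n*c1+q2*c4) (n*c4-q2*c1) (n*c3-q2*c2) p) p.2 := by
  have hq : HasDerivAt (fun s : ℝ => q1 * p.1 + q2 * s) q2 p.2 := by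
    simpa using (((hasDerivAt_id p.2).const_mul q2).const_add (q1 * p.1))
  have hL : HasDerivAt (fun s : ℝ => m * p.1 + n * s) n p.2 := by
    simpa using (((hasDerivAt_id p.2).const_mul n).const_add (m * p.1))
  have h := ((((hq.cos.mul hL.cosh).const_mul c1).add
      ((hq.cos.mul hL.sinh).const_mul c2)).add
      ((hq.sin.mul hL.cosh).const_mul c3)).add
      ((hq.sin.mul hL.sinh).const_mul c4)
  refine h.congr_deriv ?_
  unfold E; ring

lemma E_px (q1 q2 m n c1 c2 c3 c4 : ℝ) :
    px (E q1 q2 m n c1 c2 c3 c4)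
      = E q1 q2 m n (m*c2+q1*c3) (m*c1+q1*c4) (m*c4-q1*c1) (m*c3-q1*c2) := by
  funext p
  have hd := ((E_diff q1 q2 m n c1 c2 c3 c4) p).hasFDerivAt
  have h1 : HasDerivAt (fun s => E q1 q2 m n c1 c2 c3 c4 (s, p.2))
      (fderiv ℝ (E q1 q2 m n c1 c2 c3 c4) p ((1:ℝ), (0:ℝ))) p.1 := by
    have hg : HasDerivAt (fun s : ℝ => ((s, p.2) : ℝ × ℝ)) ((1:ℝ), (0:ℝ)) p.1 :=
      (hasDerivAt_id p.1).prodMk (hasDerivAt_const p.1 p.2)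
    simpa [Function.comp_def] using hd.comp_hasDerivAt p.1 hg
  exact h1.unique (E_slice_x q1 q2 m n c1 c2 c3 c4 p)

lemma E_py (q1 q2 m n c1 c2 c3 c4 : ℝ) :
    py (E q1 q2 m n c1 c2 c3 c4)
      = E q1 q2 m n (n*c2+q2*c3) (n*c1+q2*c4) (n*c4-q2*c1) (n*c3-q2*c2) := by
  funext p
  have hd := ((E_diff q1 q2 m n c1 c2 c3 c4) p).hasFDerivAt
  have h1 : HasDerivAt (fun s => E q1 q2 m n c1 c2 c3 c4 (p.1, s))
      (fderiv ℝ (E q1 q2 m n c1 c2 c3 c4) p ((0:ℝ), (1:ℝ))) p.2 := by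
    have hg : HasDerivAt (fun s : ℝ => ((p.1, s) : ℝ × ℝ)) ((0:ℝ), (1:ℝ)) p.2 :=
      (hasDerivAt_const p.2 p.1).prodMk (hasDerivAt_id p.2)
    simpa [Function.comp_def] using hd.comp_hasDerivAt p.2 hg
  exact h1.unique (E_slice_y q1 q2 m n c1 c2 c3 c4 p)

lemma E_wave (q1 q2 m n c1 c2 c3 c4 lam : ℝ)
    (hcross : m * q1 - n * q2 = 0)
    (hlam : m ^ 2 - q1 ^ 2 - n ^ 2 + q2 ^ 2 = lam) (p : ℝ × ℝ) :
    px (px (E q1 q2 m n c1 c2 c3 c4)) p - py (py (E q1 q2 m n c1 c2 c3 c4)) p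
      = lam * E q1 q2 m n c1 c2 c3 c4 p := by
  rw [E_px, E_px, E_py, E_py]
  unfold E
  set CC := Real.cos (q1 * p.1 + q2 * p.2) * Real.cosh (m * p.1 + n * p.2)
  set CS := Real.cos (q1 * p.1 + q2 * p.2) * Real.sinh (m * p.1 + n * p.2)
  set SC := Real.sin (q1 * p.1 + q2 * p.2) * Real.cosh (m * p.1 + n * p.2)
  set SS := Real.sin (q1 * p.1 + q2 * p.2) * Real.sinh (m * p.1 + n * p.2)
  linear_combination (c1*CC + c2*CS + c3*SC + c4*SS) * hlam
    + (2*c4*CC + 2*c3*CS - 2*c2*SC - 2*c1*SS) * hcross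

lemma px_congr {f g : ℝ × ℝ → ℝ} {W : Set (ℝ × ℝ)} (hW : IsOpen W) {p : ℝ × ℝ}
    (hp : p ∈ W) (h : ∀ q ∈ W, f q = g q) : px f p = px g p := by
  unfold px
  rw [Filter.EventuallyEq.fderiv_eq (Filter.eventuallyEq_of_mem (hW.mem_nhds hp) h)]

lemma py_congr {f g : ℝ × ℝ → ℝ} {W : Set (ℝ × ℝ)} (hW : IsOpen W) {p : ℝ × ℝ}
    (hp : p ∈ W) (h : ∀ q ∈ W, f q = g q) : py f p = py g p := by
  unfold py
  rw [Filter.EventuallyEq.fderiv_eq (Filter.eventuallyEq_of_mem (hW.mem_nhds hp) h)]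

lemma pxx_congr {f g : ℝ × ℝ → ℝ} {W : Set (ℝ × ℝ)} (hW : IsOpen W) {p : ℝ × ℝ}
    (hp : p ∈ W) (h : ∀ q ∈ W, f q = g q) : px (px f) p = px (px g) p :=
  px_congr hW hp (fun q hq => px_congr hW hq h)

lemma pyy_congr {f g : ℝ × ℝ → ℝ} {W : Set (ℝ × ℝ)} (hW : IsOpen W) {p : ℝ × ℝ}
    (hp : p ∈ W) (h : ∀ q ∈ W, f q = g q) : py (py f) p = py (py g) p :=
  py_congr hW hp (fun q hq => py_congr hW hq h)

lemma exp_arctanh {v : ℝ} (h : v ^ 2 < 1) :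
    Real.exp (arctanh v) = Real.sqrt (1 + v) / Real.sqrt (1 - v) := by
  obtain ⟨h1, h2⟩ := abs_lt.mp ((sq_lt_one_iff_abs_lt_one v).mp h)
  have hp : (0:ℝ) < 1 + v := by linarith
  have hm : (0:ℝ) < 1 - v := by linarith
  have hw : (0:ℝ) < (1 + v) / (1 - v) := div_pos hp hm
  rw [arctanh, ← Real.log_sqrt hw.le, Real.exp_log (Real.sqrt_pos.mpr hw),
    Real.sqrt_div hp.le]

lemma cosh_sinh_arctanh {v : ℝ} (h : v ^ 2 < 1) :
    Real.cosh (arctanh v) = 1 / Real.sqrt (1 - v ^ 2) ∧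
    Real.sinh (arctanh v) = v / Real.sqrt (1 - v ^ 2) := by
  obtain ⟨h1, h2⟩ := abs_lt.mp ((sq_lt_one_iff_abs_lt_one v).mp h)
  have hp : (0:ℝ) < 1 + v := by linarith
  have hm : (0:ℝ) < 1 - v := by linarith
  have he := exp_arctanh h
  have hA : (0:ℝ) < Real.sqrt (1 + v) := Real.sqrt_pos.mpr hp
  have hB : (0:ℝ) < Real.sqrt (1 - v) := Real.sqrt_pos.mpr hm
  have hA2 : Real.sqrt (1 + v) ^ 2 = 1 + v := Real.sq_sqrt hp.le
  have hB2 : Real.sqrt (1 - v) ^ 2 = 1 - v := Real.sq_sqrt hm.le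
  have hprod : Real.sqrt (1 - v ^ 2) = Real.sqrt (1 + v) * Real.sqrt (1 - v) := by
    rw [← Real.sqrt_mul hp.le]; ring_nf
  have hne : Real.exp (arctanh v) ≠ 0 := (Real.exp_pos _).ne'
  constructor
  · rw [Real.cosh_eq, he, Real.exp_neg, he, hprod]
    rw [inv_div]
    field_simp
    rw [hA2, hB2]; ring
  · rw [Real.sinh_eq, he, Real.exp_neg, he, hprod]
    rw [inv_div]
    field_simp
    rw [hA2, hB2]; ring

set_option maxHeartbeats 1000000 in
theorem stmt_17 (c θ a b : ℝ) (hc : 1 < c) (hab : b ^ 2 ≠ a ^ 2)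
    (ω : ℝ) (hω : ω = (a ^ 2 + b ^ 2) / ((b ^ 2 - a ^ 2) * Real.sqrt (c ^ 2 - 1)))
    (t : ℝ × ℝ → ℝ) (ht : t = fun p => a * p.2 - b * p.1)
    (Ω : Set (ℝ × ℝ))
    (hΩ : Ω = {p : ℝ × ℝ | Real.cosh θ ^ 2 * Real.sin (ω * t p) ^ 2 < 1})
    (R S : ℝ × ℝ → ℝ)
    (hRdef : R = fun p => Real.arccos (Real.cosh θ * Real.sin (ω * t p)))
    (hSdef : S = fun p => a * p.1 + b * p.2 + (2 * a * b / (b ^ 2 - a ^ 2)) * t p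
      + arctanh (Real.sinh θ * Real.tan (ω * t p)))
    (U₁ U₂ U₃ : ℝ × ℝ → ℝ)
    (hU₁ : U₁ = fun p => c * Real.cos (R p))
    (hU₂ : U₂ = fun p => Real.sin (R p) * Real.cosh (S p))
    (hU₃ : U₃ = fun p => Real.sin (R p) * Real.sinh (S p)) :
    (∀ p ∈ Ω, (U₁ p) ^ 2 / c ^ 2 + (U₂ p) ^ 2 - (U₃ p) ^ 2 = 1)
    ∧ ∃ μ : ℝ × ℝ → ℝ, ∀ p ∈ Ω,
        px (px U₁) p - py (py U₁) p = μ p * (U₁ p / c ^ 2)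
        ∧ px (px U₂) p - py (py U₂) p = μ p * U₂ p
        ∧ px (px U₃) p - py (py U₃) p = μ p * U₃ p := by
  have hba : b ^ 2 - a ^ 2 ≠ 0 := sub_ne_zero.mpr hab
  have hc0 : c ≠ 0 := by nlinarith
  have hc2 : (0:ℝ) < c ^ 2 - 1 := by nlinarith
  set s := Real.sqrt (c ^ 2 - 1) with hsdef
  have hs2 : s ^ 2 = c ^ 2 - 1 := Real.sq_sqrt hc2.le
  have hs0 : s ≠ 0 := (Real.sqrt_pos.mpr hc2).ne'
  set k : ℝ := 2 * a * b / (b ^ 2 - a ^ 2) with hk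
  set q1 : ℝ := -(ω * b) with hq1
  set q2 : ℝ := ω * a with hq2
  set m : ℝ := a - k * b with hm
  set n : ℝ := b + k * a with hn
  set lam : ℝ := -(c ^ 2 * ω ^ 2 * (b ^ 2 - a ^ 2)) with hlamdef
  have harg : ∀ q : ℝ × ℝ, q1 * q.1 + q2 * q.2 = ω * t q := by
    intro q; rw [ht, hq1, hq2]; ring
  have hΩopen : IsOpen Ω := by
    rw [hΩ, ht]
    exact isOpen_lt (by fun_prop) continuous_const
  have part1 : ∀ p ∈ Ω, (U₁ p) ^ 2 / c ^ 2 + (U₂ p) ^ 2 - (U₃ p) ^ 2 = 1 := by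
    intro p _
    rw [hU₁, hU₂, hU₃]
    simp only
    have h2 := Real.cosh_sq_sub_sinh_sq (S p)
    have h3 := Real.sin_sq_add_cos_sq (R p)
    field_simp
    linear_combination (Real.sin (R p) ^ 2) * h2 + h3
  have hcross : m * q1 - n * q2 = 0 := by
    rw [hm, hn, hk, hq1, hq2]; field_simp; ring
  have hω2 : ω ^ 2 * ((b ^ 2 - a ^ 2) ^ 2 * (c ^ 2 - 1)) = (a ^ 2 + b ^ 2) ^ 2 := by
    rw [hω, div_pow, mul_pow, hs2]
    field_simp
  have hlam2 : m ^ 2 - q1 ^ 2 - n ^ 2 + q2 ^ 2 = lam := by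
    rw [hm, hn, hk, hq1, hq2, hlamdef]
    field_simp
    linear_combination (b ^ 2 - a ^ 2) * hω2
  refine ⟨part1, ⟨fun _ => lam, ?_⟩⟩
  intro p hp
  have hpΩ : Real.cosh θ ^ 2 * Real.sin (ω * t p) ^ 2 < 1 := by rw [hΩ] at hp; exact hp
  -- U₁ agrees with an E-form on Ω
  have hU1E : ∀ q ∈ Ω, U₁ q = E q1 q2 0 0 0 0 (c * Real.cosh θ) 0 q := by
    intro q hq
    rw [hΩ] at hq
    have hq' : (Real.cosh θ * Real.sin (ω * t q)) ^ 2 < 1 := by rw [mul_pow]; exact hq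
    obtain ⟨l1, l2⟩ := abs_lt.mp ((sq_lt_one_iff_abs_lt_one _).mp hq')
    rw [hU₁]
    simp only
    rw [hRdef]
    simp only
    rw [Real.cos_arccos l1.le l2.le]
    unfold E
    rw [harg q]
    norm_num
    ring
  have hcosne : Real.cos (ω * t p) ≠ 0 := by
    intro h0
    have h1 := Real.sin_sq_add_cos_sq (ω * t p)
    rw [h0] at h1
    nlinarith [Real.one_le_cosh θ, sq_nonneg (Real.cosh θ - 1)]
  obtain ⟨ε, hε2, hεc⟩ : ∃ ε : ℝ, ε ^ 2 = 1 ∧ 0 < ε * Real.cos (ω * t p) := by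
    rcases lt_or_gt_of_ne hcosne with h | h
    · exact ⟨-1, by norm_num, by nlinarith⟩
    · exact ⟨1, by norm_num, by nlinarith⟩
  set W := Ω ∩ {q | 0 < ε * Real.cos (ω * t q)} with hW
  have hWopen : IsOpen W := by
    refine hΩopen.inter ?_
    rw [ht]
    exact isOpen_lt continuous_const (by fun_prop)
  have hpW : p ∈ W := ⟨hp, hεc⟩
  -- U₂, U₃ agree with E-forms on W
  have key : ∀ q ∈ W, U₂ q = E q1 q2 m n ε 0 0 (ε * Real.sinh θ) q
      ∧ U₃ q = E q1 q2 m n 0 ε (ε * Real.sinh θ) 0 q := by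
    intro q hq
    rw [hW, hΩ] at hq
    obtain ⟨hqΩ, hqc⟩ := hq
    simp only [Set.mem_setOf_eq] at hqΩ hqc
    have hqΩ' : Real.cosh θ ^ 2 * Real.sin (ω * t q) ^ 2 < 1 := hqΩ
    have hqc' : 0 < ε * Real.cos (ω * t q) := hqc
    have hpy2 : Real.sin (ω * t q) ^ 2 + Real.cos (ω * t q) ^ 2 = 1 :=
      Real.sin_sq_add_cos_sq (ω * t q)
    have hch : Real.cosh θ ^ 2 = Real.sinh θ ^ 2 + 1 := Real.cosh_sq θ
    have hu2 : (Real.cosh θ * Real.sin (ω * t q)) ^ 2 < 1 := by rw [mul_pow]; exact hqΩ'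
    have hcτ0 : Real.cos (ω * t q) ≠ 0 := by
      intro h0
      rw [h0] at hpy2
      nlinarith [Real.one_le_cosh θ, sq_nonneg (Real.cosh θ - 1)]
    set v := Real.sinh θ * Real.tan (ω * t q) with hv
    have hvc : v * Real.cos (ω * t q) = Real.sinh θ * Real.sin (ω * t q) := by
      rw [hv, Real.tan_eq_sin_div_cos]; field_simp
    have hcτsq : 0 < Real.cos (ω * t q) ^ 2 := by positivity
    have hvc2 : (v * Real.cos (ω * t q)) ^ 2 = (Real.sinh θ * Real.sin (ω * t q)) ^ 2 := by
      rw [hvc]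
    have e1 : v ^ 2 * Real.cos (ω * t q) ^ 2 = Real.sinh θ ^ 2 * Real.sin (ω * t q) ^ 2 := by
      linear_combination hvc2
    have e2' : Real.cosh θ ^ 2 * Real.sin (ω * t q) ^ 2
        = Real.sinh θ ^ 2 * Real.sin (ω * t q) ^ 2 + Real.sin (ω * t q) ^ 2 := by
      linear_combination Real.sin (ω * t q) ^ 2 * hch
    have e2 : Real.sinh θ ^ 2 * Real.sin (ω * t q) ^ 2 < Real.cos (ω * t q) ^ 2 := by
      linarith [hqΩ', e2', hpy2]
    have e3 : v ^ 2 * Real.cos (ω * t q) ^ 2 < 1 * Real.cos (ω * t q) ^ 2 := by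
      rw [one_mul]; linarith [e1, e2]
    have hv2 : v ^ 2 < 1 := lt_of_mul_lt_mul_right e3 (sq_nonneg _) |>.trans_le le_rfl
    have h1v : 0 < 1 - v ^ 2 := by linarith
    have hsq1 : Real.sin (R q) = Real.sqrt (1 - (Real.cosh θ * Real.sin (ω * t q)) ^ 2) := by
      rw [hRdef]
      exact Real.sin_arccos _
    have h9 : 1 - (Real.cosh θ * Real.sin (ω * t q)) ^ 2
        = (1 - v ^ 2) * (ε * Real.cos (ω * t q)) ^ 2 := by
      have h10 : (1 - v ^ 2) * (ε * Real.cos (ω * t q)) ^ 2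
          = (Real.cos (ω * t q) ^ 2 - (v * Real.cos (ω * t q)) ^ 2) * ε ^ 2 := by ring
      rw [h10, hvc, hε2]
      linear_combination (- (Real.sin (ω * t q) ^ 2)) * hch - hpy2
    have hsv : Real.sqrt (1 - (Real.cosh θ * Real.sin (ω * t q)) ^ 2)
        = Real.sqrt (1 - v ^ 2) * (ε * Real.cos (ω * t q)) := by
      rw [h9, Real.sqrt_mul h1v.le, Real.sqrt_sq hqc'.le]
    have hSq : S q = m * q.1 + n * q.2 + arctanh v := by
      have h11 : a * q.1 + b * q.2 + k * t q = m * q.1 + n * q.2 := by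
        rw [hm, hn, hk, ht]; field_simp; ring
      rw [hSdef]
      simp only
      rw [hv]
      linarith [h11]
    obtain ⟨hch1, hsh1⟩ := cosh_sinh_arctanh hv2
    have hsqv0 : Real.sqrt (1 - v ^ 2) ≠ 0 := (Real.sqrt_pos.mpr h1v).ne'
    clear_value v
    constructor
    · rw [hU₂]
      simp only
      rw [hsq1, hsv, hSq, Real.cosh_add, hch1, hsh1]
      unfold E
      rw [harg q]
      field_simp
      linear_combination (ε * Real.sinh (m * q.1 + n * q.2)) * hvc
    · rw [hU₃]
      simp only
      rw [hsq1, hsv, hSq, Real.sinh_add, hch1, hsh1]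
      unfold E
      rw [harg q]
      field_simp
      linear_combination (ε * Real.cosh (m * q.1 + n * q.2)) * hvc
  refine ⟨?_, ?_, ?_⟩
  · -- U₁ equation
    have w1 := E_wave q1 q2 0 0 0 0 (c * Real.cosh θ) 0 (q2 ^ 2 - q1 ^ 2)
      (by ring) (by ring) p
    rw [pxx_congr hΩopen hp hU1E, pyy_congr hΩopen hp hU1E, w1, ← hU1E p hp]
    rw [hlamdef, hq1, hq2]
    field_simp
    ring
  · -- U₂ equation
    have w2 := E_wave q1 q2 m n ε 0 0 (ε * Real.sinh θ) lam hcross hlam2 p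
    rw [pxx_congr hWopen hpW (fun q hq => (key q hq).1),
      pyy_congr hWopen hpW (fun q hq => (key q hq).1), w2, ← (key p hpW).1]
  · -- U₃ equation
    have w3 := E_wave q1 q2 m n 0 ε (ε * Real.sinh θ) 0 lam hcross hlam2 p
    rw [pxx_congr hWopen hpW (fun q hq => (key q hq).2),
      pyy_congr hWopen hpW (fun q hq => (key q hq).2), w3, ← (key p hpW).2]
end

section
/- Let θ ∈ (0, π/4). Define R, S : ℝ² → ℝ by R(x,y) = arcsinh(cosθ·y − sinθ·x) and S(x,y) = cosθ·x + sinθ·y. Then on all of ℝ²: 2(R_xx + R_yy) + 2·tanh(R)·sech²(R)·(S_x² + S_y²) = 0 and tanh²(R)·(S_xx + S_yy) + 2·tanh(R)·sech²(R)·(R_x·S_x + R_y·S_y) = 0. -/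
open Real

lemma sq1 (t : ℝ) : (0:ℝ) < 1 + t ^ 2 := by positivity

lemma sqrt_ne (t : ℝ) : Real.sqrt (1 + t ^ 2) ≠ 0 :=
  (Real.sqrt_pos.2 (sq1 t)).ne'

lemma hasFDerivAt_u (c s : ℝ) (p : ℝ × ℝ) :
    HasFDerivAt (fun p : ℝ × ℝ => c * p.2 - s * p.1)
      (c • (ContinuousLinearMap.snd ℝ ℝ ℝ) - s • (ContinuousLinearMap.fst ℝ ℝ ℝ)) p := by
  exact ((hasFDerivAt_snd.const_mul c).sub (hasFDerivAt_fst.const_mul s))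

lemma key (c s : ℝ) (φ φ' : ℝ → ℝ) (hφ : ∀ t, HasDerivAt φ (φ' t) t) :
    (px (fun p : ℝ × ℝ => φ (c * p.2 - s * p.1))
        = fun p => φ' (c * p.2 - s * p.1) * (-s)) ∧
    (py (fun p : ℝ × ℝ => φ (c * p.2 - s * p.1))
        = fun p => φ' (c * p.2 - s * p.1) * c) := by
  have h : ∀ p : ℝ × ℝ, HasFDerivAt (fun p : ℝ × ℝ => φ (c * p.2 - s * p.1))
      ((φ' (c * p.2 - s * p.1)) •
        (c • (ContinuousLinearMap.snd ℝ ℝ ℝ) - s • (ContinuousLinearMap.fst ℝ ℝ ℝ))) p := by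
    intro p
    exact (hφ (c * p.2 - s * p.1)).comp_hasFDerivAt p (hasFDerivAt_u c s p)
  constructor <;> funext p
  · rw [px, (h p).fderiv]
    simp [ContinuousLinearMap.smul_apply]
  · rw [py, (h p).fderiv]
    simp [ContinuousLinearMap.smul_apply]

lemma hd_inv_sqrt (t : ℝ) :
    HasDerivAt (fun t : ℝ => (Real.sqrt (1 + t ^ 2))⁻¹)
      (-(2 * t / (2 * Real.sqrt (1 + t ^ 2))) / Real.sqrt (1 + t ^ 2) ^ 2) t := by
  have h1 : HasDerivAt (fun t : ℝ => 1 + t ^ 2) (2 * t) t := by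
    simpa using ((hasDerivAt_pow 2 t).const_add 1)
  have h2 : HasDerivAt (fun t : ℝ => Real.sqrt (1 + t ^ 2))
      (1 / (2 * Real.sqrt (1 + t ^ 2)) * (2 * t)) t :=
    (Real.hasDerivAt_sqrt (sq1 t).ne').comp t h1
  have := h2.inv (sqrt_ne t)
  exact this.congr_deriv (by ring)

theorem stmt_19 (θ : ℝ) (hθ : θ ∈ Set.Ioo 0 (π / 4))
    (R S : ℝ × ℝ → ℝ)
    (hRdef : R = fun p => Real.arsinh (Real.cos θ * p.2 - Real.sin θ * p.1))
    (hSdef : S = fun p => Real.cos θ * p.1 + Real.sin θ * p.2) :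
    ∀ p : ℝ × ℝ,
      (2 * (px (px R) p + py (py R) p)
          + 2 * Real.tanh (R p) * (1 / Real.cosh (R p) ^ 2) *
            ((px S p) ^ 2 + (py S p) ^ 2) = 0)
      ∧ (Real.tanh (R p) ^ 2 * (px (px S) p + py (py S) p)
          + 2 * Real.tanh (R p) * (1 / Real.cosh (R p) ^ 2) *
            (px R p * px S p + py R p * py S p) = 0) := by
  set c := Real.cos θ
  set s := Real.sin θ
  -- derivatives of S
  have hS : ∀ p : ℝ × ℝ, HasFDerivAt S
      (c • (ContinuousLinearMap.fst ℝ ℝ ℝ) + s • (ContinuousLinearMap.snd ℝ ℝ ℝ)) p := by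
    intro p
    rw [hSdef]
    exact ((hasFDerivAt_fst.const_mul c).add (hasFDerivAt_snd.const_mul s))
  have hpxS : px S = fun _ => c := by
    funext p; rw [px, (hS p).fderiv]; simp
  have hpyS : py S = fun _ => s := by
    funext p; rw [py, (hS p).fderiv]; simp
  have hpxxS : ∀ p, px (px S) p = 0 := by
    intro p; rw [hpxS, px, fderiv_fun_const]; simp
  have hpyyS : ∀ p, py (py S) p = 0 := by
    intro p; rw [hpyS, py, fderiv_fun_const]; simp
  -- derivatives of R
  have hR1 := key c s Real.arsinh (fun t => (Real.sqrt (1 + t ^ 2))⁻¹)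
    (fun t => Real.hasDerivAt_arsinh t)
  have hpxR : px R = fun p => (Real.sqrt (1 + (c * p.2 - s * p.1) ^ 2))⁻¹ * (-s) := by
    rw [hRdef]; exact hR1.1
  have hpyR : py R = fun p => (Real.sqrt (1 + (c * p.2 - s * p.1) ^ 2))⁻¹ * c := by
    rw [hRdef]; exact hR1.2
  have hR2 := key c s (fun t => (Real.sqrt (1 + t ^ 2))⁻¹ * (-s))
    (fun t => (-(2 * t / (2 * Real.sqrt (1 + t ^ 2))) / Real.sqrt (1 + t ^ 2) ^ 2) * (-s))
    (fun t => (hd_inv_sqrt t).mul_const (-s))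
  have hR3 := key c s (fun t => (Real.sqrt (1 + t ^ 2))⁻¹ * c)
    (fun t => (-(2 * t / (2 * Real.sqrt (1 + t ^ 2))) / Real.sqrt (1 + t ^ 2) ^ 2) * c)
    (fun t => (hd_inv_sqrt t).mul_const c)
  have hpxxR : ∀ p : ℝ × ℝ, px (px R) p =
      ((-(2 * (c * p.2 - s * p.1) / (2 * Real.sqrt (1 + (c * p.2 - s * p.1) ^ 2)))
        / Real.sqrt (1 + (c * p.2 - s * p.1) ^ 2) ^ 2) * (-s)) * (-s) := by
    intro p; rw [hpxR]
    exact congrFun hR2.1 p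
  have hpyyR : ∀ p : ℝ × ℝ, py (py R) p =
      ((-(2 * (c * p.2 - s * p.1) / (2 * Real.sqrt (1 + (c * p.2 - s * p.1) ^ 2)))
        / Real.sqrt (1 + (c * p.2 - s * p.1) ^ 2) ^ 2) * c) * c := by
    intro p; rw [hpyR]
    exact congrFun hR3.2 p
  intro p
  set v := c * p.2 - s * p.1 with hv
  have hRp : R p = Real.arsinh v := by rw [hRdef]
  have htanh : Real.tanh (R p) = v / Real.sqrt (1 + v ^ 2) := by
    rw [hRp, Real.tanh_eq_sinh_div_cosh, Real.sinh_arsinh, Real.cosh_arsinh]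
  have hcosh : Real.cosh (R p) = Real.sqrt (1 + v ^ 2) := by
    rw [hRp, Real.cosh_arsinh]
  have hcs : c ^ 2 + s ^ 2 = 1 := by
    rw [add_comm]; exact Real.sin_sq_add_cos_sq θ
  have hw := sqrt_ne v
  have hwsq : Real.sqrt (1 + v ^ 2) ^ 2 = 1 + v ^ 2 := Real.sq_sqrt (sq1 v).le
  constructor
  · rw [hpxxR p, hpyyR p, htanh, hcosh, congrFun hpxS p, congrFun hpyS p, ← hv]
    field_simp
    ring_nf
  · rw [hpxxS p, hpyyS p, congrFun hpxR p, congrFun hpyR p,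
      congrFun hpxS p, congrFun hpyS p, ← hv]
    ring
end
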